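/- There exist rates λ ∈ [0,1]^3 with λ_1 + λ_2 < 1 and λ_2 + λ_3 < 1 such that, under the outer-queue-priority MSM policy π_OQ defined by S(t) = (1,0,1) if Q_1(t) > 0 or Q_3(t) > 0 and S(t) = (0,1,0) otherwise, the middle queue is unstable: limsup_{T→∞} (1/T) ∑_{t=0}^{T−1} E[Q_2(t)] = ∞. In particular, π_OQ is a maximum-size-matching policy that is not throughput-optimal. -/

import Mathlib

open MeasureTheory ProbabilityTheory Filter
open scoped ENNReal

/-- The outer-queue-priority MSM policy π_OQ for the 3-queue path graph:
serve queues 1 and 3 if either is nonempty, and serve queue 2 otherwise. -/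
def piOQ (q : Fin 3 → ℕ) : Fin 3 → ℕ :=
  if 0 < q 0 ∨ 0 < q 2 then ![1, 0, 1] else ![0, 1, 0]

/-!
Take λ = (3/4, 1/8, 3/4). Whenever an outer queue is nonempty both outer queues are served, so
they never hold more than one packet and at time t + 1 they contain exactly the arrivals of
slot t. Hence the middle queue is served at time t + 1 only if neither outer queue had an
arrival in slot t, which by independence has probability (1 - λ₁)(1 - λ₃) = 1/16 < λ₂ = 1/8.
Comparing cumulative arrivals with cumulative services gives E[Q₂(T + 1)] ≥ T / 16, and the
time averages of a linearly growing sequence tend to infinity.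
-/

open Finset Topology

theorem add_sum_le_add_sum_of_lindley {x s a : ℕ → ℕ} (h : ∀ t, x (t + 1) = x t - s t + a t)
    (T : ℕ) : x 0 + ∑ t ∈ range T, a t ≤ x T + ∑ t ∈ range T, s t := by
  induction T with
  | zero => simp
  | succ T ih => rw [sum_range_succ, sum_range_succ, h]; omega

theorem ENNReal.tendsto_cesaro_nhds_top_of_linear_growth {f : ℕ → ℝ≥0∞} {c : ℝ≥0∞} (hc : c ≠ 0)
    (hf : ∀ t, t * c ≤ f (t + 1)) :
    Tendsto (fun T : ℕ ↦ (∑ t ∈ range T, f t) / T) atTop (𝓝 ⊤) := by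
  -- Shrinking c to some 1/k reduces the estimate to arithmetic in ℕ via Gauss's sum.
  obtain ⟨k, hk⟩ := ENNReal.exists_inv_nat_lt hc
  have hk0 : k ≠ 0 := by rintro rfl; simp at hk
  have hsum : ∀ S, ((∑ t ∈ range S, t : ℕ) : ℝ≥0∞) ≤ k * ∑ t ∈ range (S + 1), f t := by
    intro S
    calc ((∑ t ∈ range S, t : ℕ) : ℝ≥0∞) = ∑ t ∈ range S, k * (t * (k : ℝ≥0∞)⁻¹) := by
          push_cast
          refine sum_congr rfl fun t _ ↦ ?_
          rw [mul_left_comm, ENNReal.mul_inv_cancel (by exact_mod_cast hk0) (by simp), mul_one]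
      _ ≤ ∑ t ∈ range S, k * f (t + 1) := by
          gcongr with t; exact (mul_le_mul_right hk.le _).trans (hf t)
      _ ≤ k * ∑ t ∈ range (S + 1), f t := by
          rw [← mul_sum, sum_range_succ' f]; exact mul_le_mul_right le_self_add _
  refine ENNReal.tendsto_nhds_top fun N ↦ ?_
  filter_upwards [eventually_ge_atTop (2 * k * (N + 1) + 3)] with T hT
  obtain ⟨S, rfl⟩ : ∃ S, T = S + 1 := ⟨T - 1, by omega⟩
  have hnat : 2 * k * (N + 1) * (S + 1) ≤ (∑ t ∈ range S, t) * 2 := by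
    rw [sum_range_id_mul_two]
    generalize 2 * k * (N + 1) = M at hT ⊢
    obtain ⟨m, rfl⟩ : ∃ m, S = M + 2 + m := ⟨S - (M + 2), by omega⟩
    rw [show M + 2 + m - 1 = M + 1 + m by omega]
    nlinarith
  have hmain : ((N + 1 : ℕ) : ℝ≥0∞) * (S + 1 : ℕ) ≤ ∑ t ∈ range (S + 1), f t := by
    have h2k : (2 * k : ℝ≥0∞) ≠ 0 := by simpa using hk0
    refine (ENNReal.mul_le_mul_iff_right h2k (ENNReal.mul_ne_top (by simp) (by simp))).1 ?_
    calc (2 * k : ℝ≥0∞) * ((N + 1 : ℕ) * (S + 1 : ℕ))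
        = ((2 * k * (N + 1) * (S + 1) : ℕ) : ℝ≥0∞) := by push_cast; ring
      _ ≤ ((∑ t ∈ range S, t : ℕ) : ℝ≥0∞) * 2 := by exact_mod_cast hnat
      _ ≤ (2 * k : ℝ≥0∞) * ∑ t ∈ range (S + 1), f t := by
          rw [mul_comm, mul_assoc]; exact mul_le_mul_right (hsum S) 2
  calc (N : ℝ≥0∞) < (N + 1 : ℕ) := by exact_mod_cast N.lt_succ_self
    _ ≤ (∑ t ∈ range (S + 1), f t) / (S + 1 : ℕ) :=
        (ENNReal.le_div_iff_mul_le (by simp) (by simp)).2 hmain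

theorem piOQ_apply_one (q : Fin 3 → ℕ) : piOQ q 1 = if q 0 = 0 ∧ q 2 = 0 then 1 else 0 := by
  unfold piOQ
  split_ifs <;> simp_all

theorem sub_piOQ_apply_eq_zero {q : Fin 3 → ℕ} {i : Fin 3} (hi : i ≠ 1) (hq : q i ≤ 1) :
    q i - piOQ q i = 0 := by
  unfold piOQ
  fin_cases i <;> split_ifs <;> simp_all

theorem piOQ_outer_queue_eq_arrival {q : ℕ → Fin 3 → ℕ} {a : Fin 3 → ℕ → ℕ} {i : Fin 3}
    (hi : i ≠ 1) (h0 : q 0 i ≤ 1) (hq : ∀ t, q (t + 1) i = q t i - piOQ (q t) i + a i t)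
    (ha : ∀ t, a i t ≤ 1) (t : ℕ) : q (t + 1) i = a i t := by
  have hstep : ∀ t, q t i ≤ 1 → q (t + 1) i = a i t := fun t h ↦ by
    rw [hq, sub_piOQ_apply_eq_zero hi h, zero_add]
  have hle : ∀ t, q t i ≤ 1 := fun t ↦ by
    induction t with
    | zero => exact h0
    | succ t ih => exact (hstep t ih).trans_le (ha t)
  exact hstep t (hle t)

section Probability

variable {Ω : Type*} [MeasurableSpace Ω] {μ : Measure Ω}

theorem lintegral_natCast_eq_measure_of_le_one {X : Ω → ℕ} (hX : Measurable X)
    (h1 : ∀ ω, X ω ≤ 1) : ∫⁻ ω, (X ω : ℝ≥0∞) ∂μ = μ {ω | X ω = 1} := by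
  have : (fun ω ↦ (X ω : ℝ≥0∞)) = {ω | X ω = 1}.indicator 1 := by
    funext ω
    rcases Nat.le_one_iff_eq_zero_or_eq_one.1 (h1 ω) with h | h <;> simp [h]
  rw [this]
  exact lintegral_indicator_one (hX (measurableSet_singleton 1))

theorem measure_eq_zero_eq_one_sub [IsProbabilityMeasure μ] {X : Ω → ℕ} (hX : Measurable X)
    (h1 : ∀ ω, X ω ≤ 1) : μ {ω | X ω = 0} = 1 - μ {ω | X ω = 1} := by
  rw [← prob_compl_eq_one_sub (s := {ω | X ω = 1}) (hX (measurableSet_singleton 1))]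
  congr 1
  ext ω
  have := h1 ω
  show X ω = 0 ↔ ¬X ω = 1
  omega

theorem natCast_mul_sub_le_lintegral_of_lindley {x s a : ℕ → Ω → ℕ}
    (h : ∀ t ω, x (t + 1) ω = x t ω - s t ω + a t ω) (ha : ∀ t, Measurable (a t))
    (hs : ∀ t, Measurable (s t)) {α β : ℝ≥0∞} (hα : ∀ t, ∫⁻ ω, (a t ω : ℝ≥0∞) ∂μ = α)
    (hβ : ∀ t, ∫⁻ ω, (s t ω : ℝ≥0∞) ∂μ = β) (T : ℕ) :
    T * (α - β) ≤ ∫⁻ ω, (x T ω : ℝ≥0∞) ∂μ := by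
  have hpath : ∀ ω, ∑ t ∈ range T, (a t ω : ℝ≥0∞) ≤ x T ω + ∑ t ∈ range T, (s t ω : ℝ≥0∞) :=
    fun ω ↦ by
      exact_mod_cast le_add_self.trans (add_sum_le_add_sum_of_lindley (x := (x · ω)) (h · ω) T)
  have hmeas : ∀ {y : Ω → ℕ}, Measurable y → Measurable fun ω ↦ (y ω : ℝ≥0∞) :=
    fun hy ↦ measurable_from_nat.comp hy
  have hmean : T * α ≤ ∫⁻ ω, (x T ω : ℝ≥0∞) ∂μ + T * β := calc
    T * α = ∫⁻ ω, ∑ t ∈ range T, (a t ω : ℝ≥0∞) ∂μ := by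
      rw [lintegral_finsetSum _ fun t _ ↦ hmeas (ha t)]; simp [hα]
    _ ≤ ∫⁻ ω, (x T ω + ∑ t ∈ range T, (s t ω : ℝ≥0∞)) ∂μ := lintegral_mono hpath
    _ = ∫⁻ ω, (x T ω : ℝ≥0∞) ∂μ + T * β := by
      rw [lintegral_add_right _ (Finset.measurable_sum _ fun t _ ↦ hmeas (hs t)),
        lintegral_finsetSum _ fun t _ ↦ hmeas (hs t)]
      simp [hβ]
  rw [ENNReal.mul_sub fun _ _ ↦ ENNReal.natCast_ne_top T]
  exact tsub_le_iff_right.2 hmean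

theorem measurable_piOQ_apply {q : Ω → Fin 3 → ℕ} {X Y : Ω → ℕ} (hX : ∀ ω, q ω 0 = X ω)
    (hY : ∀ ω, q ω 2 = Y ω) (hXm : Measurable X) (hYm : Measurable Y) (i : Fin 3) :
    Measurable fun ω ↦ piOQ (q ω) i := by
  have : (fun ω ↦ piOQ (q ω) i) =
      (fun p : ℕ × ℕ ↦ piOQ ![p.1, 0, p.2] i) ∘ fun ω ↦ (X ω, Y ω) := by
    funext ω; unfold piOQ; rw [hX, hY]; rfl
  rw [this]
  exact (measurable_of_countable _).comp (hXm.prodMk hYm)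

theorem lintegral_piOQ_apply_one {q : Ω → Fin 3 → ℕ} {X Y : Ω → ℕ} (hX : ∀ ω, q ω 0 = X ω)
    (hY : ∀ ω, q ω 2 = Y ω) (hXm : Measurable X) (hYm : Measurable Y) (hind : IndepFun X Y μ) :
    ∫⁻ ω, (piOQ (q ω) 1 : ℝ≥0∞) ∂μ = μ {ω | X ω = 0} * μ {ω | Y ω = 0} := by
  have : (fun ω ↦ (piOQ (q ω) 1 : ℝ≥0∞)) = (X ⁻¹' {0} ∩ Y ⁻¹' {0}).indicator 1 := by
    funext ω
    by_cases ha : X ω = 0 <;> by_cases hb : Y ω = 0 <;> simp [piOQ_apply_one, hX, hY, ha, hb]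
  rw [this, lintegral_indicator_one ((hXm (measurableSet_singleton 0)).inter
    (hYm (measurableSet_singleton 0)))]
  exact hind.measure_inter_preimage_eq_mul _ _ (measurableSet_singleton 0)
    (measurableSet_singleton 0)

theorem piOQ_middle_queue_linear_growth [IsProbabilityMeasure μ] {A : Fin 3 → ℕ → Ω → ℕ}
    {Q : ℕ → Fin 3 → Ω → ℕ} {r : Fin 3 → ℝ≥0∞} (hA : ∀ i t, Measurable (A i t))
    (hA1 : ∀ i t ω, A i t ω ≤ 1) (hrate : ∀ i t, μ {ω | A i t ω = 1} = r i)
    (hind : ∀ t, IndepFun (A 0 t) (A 2 t) μ) (hQ0 : ∀ i ω, Q 0 i ω = 0)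
    (hQ : ∀ t i ω, Q (t + 1) i ω = Q t i ω - piOQ (fun j ↦ Q t j ω) i + A i t ω) (T : ℕ) :
    T * (r 1 - (1 - r 0) * (1 - r 2)) ≤ ∫⁻ ω, (Q (T + 1) 1 ω : ℝ≥0∞) ∂μ := by
  have houter : ∀ i ≠ 1, ∀ t ω, Q (t + 1) i ω = A i t ω := fun i hi t ω ↦
    piOQ_outer_queue_eq_arrival (q := (Q · · ω)) (a := (A · · ω)) hi (by simp [hQ0]) (hQ · i ω)
      (hA1 i · ω) t
  have hidle : ∀ i t, μ {ω | A i t ω = 0} = 1 - r i := fun i t ↦ by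
    rw [measure_eq_zero_eq_one_sub (hA i t) (hA1 i t), hrate]
  -- Shifted by one slot: from time 1 on, the middle service is a function of the previous
  -- slot's outer arrivals.
  refine natCast_mul_sub_le_lintegral_of_lindley (x := fun t ω ↦ Q (t + 1) 1 ω)
    (a := fun t ↦ A 1 (t + 1)) (fun t ω ↦ hQ (t + 1) 1 ω) (fun t ↦ hA 1 (t + 1))
    (fun t ↦ measurable_piOQ_apply (houter 0 (by decide) t) (houter 2 (by decide) t)
      (hA 0 t) (hA 2 t) 1)
    (fun t ↦ by rw [lintegral_natCast_eq_measure_of_le_one (hA 1 _) (hA1 1 _), hrate])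
    (fun t ↦ ?_) T
  rw [lintegral_piOQ_apply_one (houter 0 (by decide) t) (houter 2 (by decide) t) (hA 0 t)
    (hA 2 t) (hind t), hidle, hidle]

end Probability

/-- π_OQ is an MSM policy that is not throughput-optimal: there are rates in the interior of
the capacity region for which, in every system evolving under π_OQ with those rates, the
middle queue is unstable (the time-averaged expected backlog of queue 2 has limsup = ∞). -/
theorem piOQ_not_throughput_optimal :
    ∃ lam : Fin 3 → ℝ,
      (∀ i, 0 ≤ lam i ∧ lam i ≤ 1) ∧ lam 0 + lam 1 < 1 ∧ lam 1 + lam 2 < 1 ∧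
      ∀ (Ω : Type) [MeasurableSpace Ω] (μ : Measure Ω) [IsProbabilityMeasure μ]
        (A : Fin 3 → ℕ → Ω → ℕ),
        (∀ i t, Measurable (A i t)) →
        (∀ i t ω, A i t ω ≤ 1) →
        (∀ i t, μ {ω | A i t ω = 1} = ENNReal.ofReal (lam i)) →
        iIndepFun
          (fun p : Fin 3 × ℕ => fun ω => A p.1 p.2 ω) μ →
        ∀ Q : ℕ → Fin 3 → Ω → ℕ,
          (∀ i ω, Q 0 i ω = 0) →
          (∀ t i ω, Q (t + 1) i ω = Q t i ω - piOQ (fun j => Q t j ω) i + A i t ω) →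
          limsup (fun T : ℕ =>
              (∑ t ∈ Finset.range T, ∫⁻ ω, (Q t 1 ω : ℝ≥0∞) ∂μ) / (T : ℝ≥0∞))
            atTop = ⊤ := by
  refine ⟨![3/4, 1/8, 3/4], fun i ↦ by fin_cases i <;> norm_num, by norm_num,
    by norm_num [Matrix.cons_val_two], ?_⟩
  intro Ω _ μ _ A hA hA1 hrate hind Q hQ0 hQ
  have hdrift :
      ENNReal.ofReal (1 / 8) - (1 - ENNReal.ofReal (3 / 4)) * (1 - ENNReal.ofReal (3 / 4)) ≠ 0 := by
    rw [← ENNReal.ofReal_one, ← ENNReal.ofReal_sub _ (by norm_num),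
      ← ENNReal.ofReal_mul (by norm_num), ne_eq, tsub_eq_zero_iff_le,
      ENNReal.ofReal_le_ofReal_iff (by norm_num)]
    norm_num
  refine (ENNReal.tendsto_cesaro_nhds_top_of_linear_growth
    (f := fun T ↦ ∫⁻ ω, (Q T 1 ω : ℝ≥0∞) ∂μ) ?_ (piOQ_middle_queue_linear_growth hA hA1 hrate
      (fun t ↦ hind.indepFun (by simp : ((0 : Fin 3), t) ≠ (2, t))) hQ0 hQ)).limsup_eq
  simpa [Matrix.cons_val_two] using hdrift
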